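/- Let p, q be non-constant one-variable holomorphic polynomials and S = { (z,w) ∈ ℂ² : q(w) = conj(p(z)) }. For every closed ball B ⊂ ℂ², the compact set S ∩ B is polynomially convex. -/

import Mathlib

open Complex Polynomial Metric

/-!
The set `S ∩ B` is cut out of the ball `B` by the two equations `Re (p(z) - q(w)) = 0` and
`Re (i (p(z) + q(w))) = 0`. The polynomial hull of a bounded set `K` keeps every inequality
`Re g ≤ 0` valid on `K`: the modulus of the polynomial `(g + t)²` is `|g|² + 2t Re g + t²`, so
the hull bound gives `2t Re g(ζ) ≤ sup_K |g|²` for all `t > 0`. It also stays inside every ball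
`closedBall c R ⊇ K`, by the hull bound for the linear polynomial `w ↦ ⟪ζ - c, w - c⟫`.
-/

/-- The polynomially convex hull of a compact set in ℂ² = EuclideanSpace ℂ (Fin 2). -/
def polyHull (K : Set (EuclideanSpace ℂ (Fin 2))) : Set (EuclideanSpace ℂ (Fin 2)) :=
  {z | ∀ P : MvPolynomial (Fin 2) ℂ,
    ‖MvPolynomial.eval (fun j => z j) P‖ ≤
      sSup ((fun w : EuclideanSpace ℂ (Fin 2) => ‖MvPolynomial.eval (fun j => w j) P‖) '' K)}

lemma Complex.sq_norm_add_ofReal (z : ℂ) (t : ℝ) :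
    ‖z + t‖ ^ 2 = ‖z‖ ^ 2 + 2 * t * z.re + t ^ 2 := by
  simp only [Complex.sq_norm, normSq_apply, add_re, add_im, ofReal_re, ofReal_im]
  ring

lemma Complex.eq_conj_iff_re_sub_eq_zero_and_re_I_mul_add_eq_zero {a b : ℂ} :
    b = starRingEnd ℂ a ↔ (a - b).re = 0 ∧ (I * (a + b)).re = 0 := by
  simp only [Complex.ext_iff, conj_re, conj_im, sub_re, I_mul_re, add_im]
  constructor <;> intro h <;> constructor <;> linarith [h.1, h.2]

lemma MvPolynomial.eval_sum_C_conj_mul_X {σ : Type*} [Fintype σ] (v w : EuclideanSpace ℂ σ) :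
    eval w.ofLp (∑ j, C (starRingEnd ℂ (v j)) * X j) = inner ℂ v w := by
  simp [PiLp.inner_apply, mul_comm]

section PolyHull

variable {K : Set (EuclideanSpace ℂ (Fin 2))} {ζ : EuclideanSpace ℂ (Fin 2)}

lemma nonempty_of_mem_polyHull (hζ : ζ ∈ polyHull K) : K.Nonempty := by
  rw [Set.nonempty_iff_ne_empty]
  rintro rfl
  exact absurd (hζ 1) (by simp)

lemma norm_eval_le_of_mem_polyHull (hζ : ζ ∈ polyHull K) {P : MvPolynomial (Fin 2) ℂ} {M : ℝ}
    (hM : ∀ w ∈ K, ‖MvPolynomial.eval w.ofLp P‖ ≤ M) : ‖MvPolynomial.eval ζ.ofLp P‖ ≤ M :=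
  (hζ P).trans <| csSup_le ((nonempty_of_mem_polyHull hζ).image _) (Set.forall_mem_image.2 hM)

lemma bddAbove_norm_eval (hK : Bornology.IsBounded K) (P : MvPolynomial (Fin 2) ℂ) :
    BddAbove ((fun w : EuclideanSpace ℂ (Fin 2) => ‖MvPolynomial.eval w.ofLp P‖) '' K) := by
  have hcont : Continuous fun w : EuclideanSpace ℂ (Fin 2) => ‖MvPolynomial.eval w.ofLp P‖ :=
    ((MvPolynomial.continuous_eval P).comp (PiLp.continuous_ofLp 2 _)).norm
  exact (hK.isCompact_closure.image hcont).bddAbove.mono (Set.image_mono subset_closure)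

lemma subset_polyHull (hK : Bornology.IsBounded K) : K ⊆ polyHull K :=
  fun _ hw P => le_csSup (bddAbove_norm_eval hK P) ⟨_, hw, rfl⟩

lemma re_eval_nonpos_of_mem_polyHull (hK : Bornology.IsBounded K) (hζ : ζ ∈ polyHull K)
    {g : MvPolynomial (Fin 2) ℂ} (hg : ∀ w ∈ K, (MvPolynomial.eval w.ofLp g).re ≤ 0) :
    (MvPolynomial.eval ζ.ofLp g).re ≤ 0 := by
  obtain ⟨M, hM⟩ := bddAbove_norm_eval hK g
  have hsq (t : ℝ) (z : EuclideanSpace ℂ (Fin 2)) :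
      ‖MvPolynomial.eval z.ofLp ((g + MvPolynomial.C (t : ℂ)) ^ 2)‖ =
        ‖MvPolynomial.eval z.ofLp g‖ ^ 2 + 2 * t * (MvPolynomial.eval z.ofLp g).re + t ^ 2 := by
    simp only [map_pow, map_add, MvPolynomial.eval_C, norm_pow, Complex.sq_norm_add_ofReal]
  have hbound (t : ℝ) (ht : 0 < t) : 2 * t * (MvPolynomial.eval ζ.ofLp g).re ≤ M ^ 2 := by
    have hζt := norm_eval_le_of_mem_polyHull hζ (P := (g + MvPolynomial.C (t : ℂ)) ^ 2)
      (M := M ^ 2 + t ^ 2) fun w hw => by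
      have hw_norm : ‖MvPolynomial.eval w.ofLp g‖ ≤ M := hM ⟨w, hw, rfl⟩
      rw [hsq]
      nlinarith [hg w hw, norm_nonneg (MvPolynomial.eval w.ofLp g)]
    rw [hsq] at hζt
    nlinarith [norm_nonneg (MvPolynomial.eval ζ.ofLp g)]
  by_contra! hpos
  have := hbound ((M ^ 2 + 1) / (2 * (MvPolynomial.eval ζ.ofLp g).re)) (by positivity)
  field_simp at this
  linarith

lemma re_eval_eq_zero_of_mem_polyHull (hK : Bornology.IsBounded K) (hζ : ζ ∈ polyHull K)
    {g : MvPolynomial (Fin 2) ℂ} (hg : ∀ w ∈ K, (MvPolynomial.eval w.ofLp g).re = 0) :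
    (MvPolynomial.eval ζ.ofLp g).re = 0 := by
  have hle := re_eval_nonpos_of_mem_polyHull hK hζ fun w hw => (hg w hw).le
  have hge := re_eval_nonpos_of_mem_polyHull hK hζ (g := -g) fun w hw => by simp [hg w hw]
  simp only [map_neg, neg_re, neg_nonpos] at hge
  exact hle.antisymm hge

lemma polyHull_subset_closedBall {c : EuclideanSpace ℂ (Fin 2)} {R : ℝ}
    (hK : K ⊆ closedBall c R) : polyHull K ⊆ closedBall c R := by
  intro ζ hζ
  set v := ζ - c
  have hL (w : EuclideanSpace ℂ (Fin 2)) : MvPolynomial.eval w.ofLp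
      (∑ j, MvPolynomial.C (starRingEnd ℂ (v j)) * MvPolynomial.X j -
        MvPolynomial.C (inner ℂ v c)) = inner ℂ v (w - c) := by
    rw [map_sub, MvPolynomial.eval_sum_C_conj_mul_X, MvPolynomial.eval_C, inner_sub_right]
  have h := norm_eval_le_of_mem_polyHull hζ (M := ‖v‖ * R) fun w hw => by
    rw [hL]
    exact (norm_inner_le_norm _ _).trans (by gcongr; exact mem_closedBall_iff_norm.1 (hK hw))
  rw [hL, inner_self_eq_norm_sq_to_K] at h
  obtain ⟨w, hw⟩ := nonempty_of_mem_polyHull hζ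
  have hR : 0 ≤ R := dist_nonneg.trans (hK hw)
  rw [mem_closedBall_iff_norm]
  simp only [norm_pow, RCLike.norm_ofReal, abs_norm] at h
  nlinarith [norm_nonneg v]

end PolyHull

lemma eq_conj_eval_iff_re_eval_eq_zero (p q : ℂ[X]) (w : EuclideanSpace ℂ (Fin 2)) :
    q.eval (w 1) = starRingEnd ℂ (p.eval (w 0)) ↔
      (MvPolynomial.eval w.ofLp (p.toMvPolynomial 0 - q.toMvPolynomial 1)).re = 0 ∧
      (MvPolynomial.eval w.ofLp
        (MvPolynomial.C I * (p.toMvPolynomial 0 + q.toMvPolynomial 1))).re = 0 := by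
  simp only [map_sub, map_add, map_mul, MvPolynomial.eval_C, MvPolynomial.eval_toMvPolynomial]
  exact Complex.eq_conj_iff_re_sub_eq_zero_and_re_I_mul_add_eq_zero

theorem variety_cap_ball_polyconvex_general (p q : Polynomial ℂ)
    (c : EuclideanSpace ℂ (Fin 2)) (R : ℝ) :
    polyHull ({ζ : EuclideanSpace ℂ (Fin 2) |
        q.eval (ζ 1) = starRingEnd ℂ (p.eval (ζ 0))} ∩ Metric.closedBall c R)
      = {ζ : EuclideanSpace ℂ (Fin 2) |
        q.eval (ζ 1) = starRingEnd ℂ (p.eval (ζ 0))} ∩ Metric.closedBall c R := by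
  set K := {ζ : EuclideanSpace ℂ (Fin 2) |
    q.eval (ζ 1) = starRingEnd ℂ (p.eval (ζ 0))} ∩ Metric.closedBall c R
  have hK : Bornology.IsBounded K := isBounded_closedBall.subset Set.inter_subset_right
  have hKS (w : EuclideanSpace ℂ (Fin 2)) (hw : w ∈ K) :=
    (eq_conj_eval_iff_re_eval_eq_zero p q w).1 hw.1
  refine (subset_polyHull hK).antisymm' fun ζ hζ =>
    ⟨?_, polyHull_subset_closedBall Set.inter_subset_right hζ⟩
  exact (eq_conj_eval_iff_re_eval_eq_zero p q ζ).2
    ⟨re_eval_eq_zero_of_mem_polyHull hK hζ fun w hw => (hKS w hw).1,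
      re_eval_eq_zero_of_mem_polyHull hK hζ fun w hw => (hKS w hw).2⟩

theorem variety_cap_ball_polyconvex (p q : Polynomial ℂ)
    (hp : 0 < p.natDegree) (hq : 0 < q.natDegree)
    (c : EuclideanSpace ℂ (Fin 2)) (R : ℝ) :
    polyHull ({ζ : EuclideanSpace ℂ (Fin 2) |
        q.eval (ζ 1) = starRingEnd ℂ (p.eval (ζ 0))} ∩ Metric.closedBall c R)
      = {ζ : EuclideanSpace ℂ (Fin 2) |
        q.eval (ζ 1) = starRingEnd ℂ (p.eval (ζ 0))} ∩ Metric.closedBall c R :=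
  variety_cap_ball_polyconvex_general p q c R
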